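/- arXiv:1310.1765 — 2 statements merged into one kernel-verified Lean document; each statement's English description precedes it below -/
import Mathlib

section
/- Assume d is not a square in F. Let χ : F^× → ℂ^× be a group homomorphism trivial on o^×, and let Ω : T(F) → ℂ^× be the homomorphism Ω(t) = χ(det t) for all t ∈ T(F) (so Ω is trivial on U_0 = T(F) ∩ GL₂(o), i.e., c(Ω) = 0). Let B : GL₂(F) → ℂ satisfy: (E) B(t·g·k) = Ω(t)·B(g) for all t ∈ T(F), g ∈ GL₂(F), k ∈ I; (N) for every set R ⊆ o of representatives of o/p and every g ∈ GL₂(F), ∑_{u ∈ R} B(g·[[1, 0], [u, 1]]) = −B(g·w); (A) B(g·[[0, 1], [ϖ, 0]]) = −χ(ϖ)·B(g) for all g ∈ GL₂(F). Then B(w) = 0. -/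
open Matrix

noncomputable section

abbrev Zm0 : Type := WithZero (Multiplicative ℤ)

/-- `ev n` is the value (in `ℤₘ₀ = WithZero (Multiplicative ℤ)`) of an element of additive
valuation `n`; thus `x ∈ 𝔭^n` iff `v x ≤ ev n`, `x ∈ 𝔬` iff `v x ≤ ev 0`, and `x ∈ 𝔬^×` iff
`v x = ev 0`. -/
def ev (n : ℤ) : Zm0 := ((Multiplicative.ofAdd (-n) : Multiplicative ℤ) : Zm0)

variable {F : Type*} [Field F]

/-- the matrix t(x,y) = [[x, cy],[−ay, x−by]] -/
def tmat (a b c x y : F) : Matrix (Fin 2) (Fin 2) F :=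
  !![x, c * y; -(a * y), x - b * y]

/-- the torus T(F) ⊆ GL₂(F), as a set of matrices -/
def TSet (a b c : F) : Set (Matrix (Fin 2) (Fin 2) F) :=
  {m | ∃ x y : F, x ^ 2 - b * x * y + a * c * y ^ 2 ≠ 0 ∧ m = tmat a b c x y}

def wmat (F : Type*) [Field F] : Matrix (Fin 2) (Fin 2) F := !![0, 1; -1, 0]

/-- GL₂(𝔬) : integral entries and unit determinant -/
def GL2O (v : Valuation F Zm0) : Set (Matrix (Fin 2) (Fin 2) F) :=
  {g | (∀ i j, v (g i j) ≤ ev 0) ∧ v g.det = ev 0}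

/-- the Iwahori subgroup I = { g ∈ GL₂(𝔬) : g₂₁ ∈ 𝔭 } -/
def Iwahori (v : Valuation F Zm0) : Set (Matrix (Fin 2) (Fin 2) F) :=
  {g | g ∈ GL2O v ∧ v (g 1 0) ≤ ev 1}

/-- membership in U_m ⊆ T(F): U_0 = T(F) ∩ GL₂(𝔬), and for m ≥ 1,
U_m = { t ∈ T(F) : t − 1 ∈ ϖ^m·M₂(𝔬) } -/
def Umem (v : Valuation F Zm0) (a b c : F) (m : ℕ) (t : Matrix (Fin 2) (Fin 2) F) : Prop :=
  t ∈ TSet a b c ∧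
    (if m = 0 then (∀ i j, v (t i j) ≤ ev 0) ∧ v t.det = ev 0
     else ∀ i j, v ((t - 1) i j) ≤ ev m)

/-!
Write `n(u) = [[1, 0], [u, 1]]` and `Q(z) = z² + bz + ac = det t(-z, 1)`. Among the `q + 1`
edges `w`, `n(u)` (`u ∈ 𝔬/𝔭`) at the vertex `GL₂(𝔬)` of the tree, the edge `n(u)` is
`T(F)`-equivalent to `w` as soon as `Q(cu)` is a unit, so everything depends on how `Q` factors
modulo `𝔭`. With no residual root, (N) gives `(q + 1) B(w) = 0`. With two simple residual roots,
the two exceptional edges cancel by (A), leaving `(q - 1) B(w) = 0`. With a double residual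
root `r`, (N) gives `B(n(r/c)) = -q B(w)`. If moreover `v(Q(r)) = 1`, computing
`B(n(r/c)·[[0, 1], [ϖ, 0]])` once by (A) and once by (N) at the next vertex gives
`2q χ(ϖ) B(w) = 0`. If `Q(r) ∈ 𝔭²`, then `g ↦ B([[1, 0], [r/c, ϖ]]·g)` satisfies the
same hypotheses for a torus of discriminant `d/ϖ²`, and induction on `v(d)` finishes.
-/

lemma ev_eq_exp (n : ℤ) : ev n = WithZero.exp (-n) := rfl

lemma ev_add (m n : ℤ) : ev (m + n) = ev m * ev n := by
  simp only [ev_eq_exp, neg_add, WithZero.exp_add]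

lemma ev_le_ev {m n : ℤ} : ev m ≤ ev n ↔ n ≤ m := by
  rw [ev_eq_exp, ev_eq_exp]; simp only [WithZero.exp_le_exp, neg_le_neg_iff]

lemma ev_lt_ev {m n : ℤ} : ev m < ev n ↔ n < m := by
  rw [ev_eq_exp, ev_eq_exp]; simp only [WithZero.exp_lt_exp, neg_lt_neg_iff]

lemma ev_injective : Function.Injective ev := fun m n h => by
  simpa [ev_eq_exp] using h

lemma ev_ne_zero (n : ℤ) : ev n ≠ 0 := WithZero.coe_ne_zero

lemma exists_eq_ev {x : Zm0} (hx : x ≠ 0) : ∃ n : ℤ, x = ev n :=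
  ⟨-WithZero.log x, by rw [ev_eq_exp, neg_neg, WithZero.exp_log hx]⟩

lemma eq_ev_or_le_ev_add_one {x : Zm0} {m : ℤ} (h : x ≤ ev m) :
    x = ev m ∨ x ≤ ev (m + 1) := by
  rcases eq_or_ne x 0 with rfl | hx
  · exact Or.inr zero_le
  obtain ⟨n, rfl⟩ := exists_eq_ev hx
  rw [ev_le_ev] at h ⊢
  rcases h.lt_or_eq with h | rfl
  · exact Or.inr h
  · exact Or.inl rfl

namespace Valuation

variable (v : Valuation F Zm0) {x y : F} {m n : ℤ}

lemma ne_zero_of_eq_ev (h : v x = ev m) : x ≠ 0 := by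
  rintro rfl
  exact ev_ne_zero m (h.symm.trans v.map_zero)

lemma map_zero_le_ev : v 0 ≤ ev m := by
  rw [v.map_zero]; exact zero_le

lemma map_one_eq_ev : v 1 = ev 0 := v.map_one

lemma map_natCast_le_ev (N : ℕ) : v N ≤ ev 0 := by
  induction N with
  | zero => rw [Nat.cast_zero]; exact v.map_zero_le_ev
  | succ N ih => rw [Nat.cast_succ]; exact v.map_add_le ih v.map_one_eq_ev.le

lemma map_ofNat_le_ev (N : ℕ) [N.AtLeastTwo] : v (OfNat.ofNat N : F) ≤ ev 0 :=
  Nat.cast_ofNat (R := F) (n := N) ▸ v.map_natCast_le_ev N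

lemma le_ev_of_le (h : v x ≤ ev m) (hnm : n ≤ m := by norm_num) : v x ≤ ev n :=
  h.trans (ev_le_ev.mpr hnm)

lemma map_mul_le_ev (hx : v x ≤ ev m) (hy : v y ≤ ev n) : v (x * y) ≤ ev (m + n) := by
  rw [v.map_mul, ev_add]; exact mul_le_mul' hx hy

lemma map_mul_eq_ev (hx : v x = ev m) (hy : v y = ev n) : v (x * y) = ev (m + n) := by
  rw [v.map_mul, hx, hy, ev_add]

lemma map_sq_le_ev (hx : v x ≤ ev m) : v (x ^ 2) ≤ ev (m + m) :=
  sq x ▸ v.map_mul_le_ev hx hx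

lemma map_sq_eq_ev (hx : v x = ev m) : v (x ^ 2) = ev (m + m) :=
  sq x ▸ v.map_mul_eq_ev hx hx

lemma map_inv_eq_ev (hx : v x = ev m) : v x⁻¹ = ev (-m) := by
  rw [map_inv₀, hx, ev_eq_exp, ev_eq_exp, neg_neg, WithZero.exp_neg, inv_inv]

lemma map_div_le_ev (hx : v x ≤ ev m) (hy : v y = ev n) : v (x / y) ≤ ev (m - n) :=
  div_eq_mul_inv x y ▸ v.map_mul_le_ev hx (v.map_inv_eq_ev hy).le

lemma map_div_eq_ev (hx : v x = ev m) (hy : v y = ev n) : v (x / y) = ev (m - n) :=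
  div_eq_mul_inv x y ▸ v.map_mul_eq_ev hx (v.map_inv_eq_ev hy)

lemma map_add_eq_ev (hx : v x = ev m) (hy : v y ≤ ev n) (hmn : m < n := by norm_num) :
    v (x + y) = ev m := by
  rw [Valuation.map_add_eq_of_lt_left, hx]
  exact hy.trans_lt (hx ▸ ev_lt_ev.mpr hmn)

end Valuation

lemma exists_val_disc_eq {v : Valuation F Zm0} {a b c : F} (ha : v a ≤ ev 0) (hb : v b ≤ ev 0)
    (hc : v c ≤ ev 0) (hd : b ^ 2 - 4 * (a * c) ≠ 0) :
    ∃ n : ℕ, v (b ^ 2 - 4 * (a * c)) = ev n := by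
  obtain ⟨m, hm⟩ := exists_eq_ev (v.ne_zero_iff.mpr hd)
  have hle : v (b ^ 2 - 4 * (a * c)) ≤ ev 0 :=
    v.map_sub_le (v.map_sq_le_ev hb) (v.map_mul_le_ev (v.map_ofNat_le_ev 4) (v.map_mul_le_ev ha hc))
  rw [hm, ev_le_ev] at hle
  exact ⟨m.toNat, by rw [hm, Int.toNat_of_nonneg hle]⟩

lemma quadratic_residual_cases {v : Valuation F Zm0} {ϖ β γ : F} (hϖ : v ϖ = ev 1)
    (hβ : v β ≤ ev 0) (hγ : v γ ≤ ev 0) :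
    (∀ z, v z ≤ ev 0 → v (z ^ 2 + β * z + γ) = ev 0) ∨
    (∃ r, v r ≤ ev 0 ∧ v (r ^ 2 + β * r + γ) = ev 1 ∧ v (2 * r + β) = ev 0) ∨
    (∃ r, v r ≤ ev 0 ∧ v (r ^ 2 + β * r + γ) ≤ ev 1 ∧ v (2 * r + β) ≤ ev 1) := by
  have hint : ∀ z, v z ≤ ev 0 → v (z ^ 2 + β * z + γ) ≤ ev 0 := fun z hz =>
    v.map_add_le (v.map_add_le (v.map_sq_le_ev hz) (v.map_mul_le_ev hβ hz)) hγ
  by_cases hroot : ∀ z, v z ≤ ev 0 → ¬ v (z ^ 2 + β * z + γ) ≤ ev 1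
  · exact Or.inl fun z hz => (eq_ev_or_le_ev_add_one (hint z hz)).resolve_right (hroot z hz)
  push Not at hroot
  obtain ⟨r, hr, he⟩ := hroot
  have hδ : v (2 * r + β) ≤ ev 0 := v.map_add_le (v.map_mul_le_ev (v.map_ofNat_le_ev 2) hr) hβ
  rcases eq_ev_or_le_ev_add_one hδ with hδ | hδ
  · refine Or.inr (Or.inl ?_)
    rcases eq_ev_or_le_ev_add_one he with he | he
    · exact ⟨r, hr, he, hδ⟩
    -- `r ↦ r + ϖ` changes the value by `ϖ (2r + β)` modulo `𝔭²`, and `2r + β` is a unit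
    refine ⟨r + ϖ, v.map_add_le hr (v.le_ev_of_le hϖ.le), ?_, ?_⟩
    · rw [show (r + ϖ) ^ 2 + β * (r + ϖ) + γ
        = ϖ * (2 * r + β) + (r ^ 2 + β * r + γ + ϖ ^ 2) by ring]
      exact v.map_add_eq_ev (v.map_mul_eq_ev hϖ hδ) (v.map_add_le he (v.map_sq_eq_ev hϖ).le)
    · rw [show 2 * (r + ϖ) + β = 2 * r + β + 2 * ϖ by ring]
      exact v.map_add_eq_ev hδ (v.map_mul_le_ev (v.map_ofNat_le_ev 2) hϖ.le)
  · exact Or.inr (Or.inr ⟨r, hr, he, hδ⟩)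

def IsResidueSystem (v : Valuation F Zm0) (R : Finset F) : Prop :=
  (∀ r ∈ R, v r ≤ ev 0) ∧ ∀ x : F, v x ≤ ev 0 → ∃! r, r ∈ R ∧ v (x - r) ≤ ev 1

namespace IsResidueSystem

variable {v : Valuation F Zm0} {R : Finset F}

lemma exists_mem_forall_ne (hR : IsResidueSystem v R) {u : F} (hu : v u ≤ ev 0) :
    ∃ ρ ∈ R, v (ρ - u) ≤ ev 1 ∧ ∀ r ∈ R, r ≠ ρ → v (r - u) = ev 0 := by
  obtain ⟨ρ, ⟨hρR, hρu⟩, hρ⟩ := hR.2 u hu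
  refine ⟨ρ, hρR, v.map_sub_swap u ρ ▸ hρu, fun r hr hrρ => ?_⟩
  rcases eq_ev_or_le_ev_add_one (v.map_sub_le (hR.1 r hr) hu) with h | h
  · exact h
  · exact absurd (hρ r ⟨hr, v.map_sub_swap r u ▸ h⟩) hrρ

lemma one_lt_card (hR : IsResidueSystem v R) : 1 < R.card := by
  obtain ⟨ρ, hρR, hρ, -⟩ := hR.exists_mem_forall_ne v.map_zero_le_ev
  obtain ⟨σ, hσR, hσ, -⟩ := hR.exists_mem_forall_ne v.map_one_eq_ev.le
  refine Finset.one_lt_card.mpr ⟨σ, hσR, ρ, hρR, fun hσρ => ?_⟩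
  have h : v (1 : F) ≤ ev 1 := by
    simpa [hσρ] using v.map_sub_le hρ hσ
  exact absurd (v.map_one_eq_ev ▸ h) (by rw [ev_le_ev]; norm_num)

end IsResidueSystem

structure IsUnramifiedChar (v : Valuation F Zm0) (χ : F → ℂ) : Prop where
  map_mul : ∀ x y : F, x ≠ 0 → y ≠ 0 → χ (x * y) = χ x * χ y
  ne_zero : ∀ x : F, x ≠ 0 → χ x ≠ 0
  map_unit_eq_one : ∀ u : F, v u = ev 0 → χ u = 1

namespace IsUnramifiedChar

variable {v : Valuation F Zm0} {χ : F → ℂ}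

lemma map_eq_of_val_eq (hχ : IsUnramifiedChar v χ) {x y : F} (hy : y ≠ 0) (h : v x = v y) :
    χ x = χ y := by
  have hxy : v (x / y) = ev 0 := by rw [map_div₀, h, div_self (v.ne_zero_iff.mpr hy)]; rfl
  rw [← div_mul_cancel₀ x hy, hχ.map_mul _ _ (v.ne_zero_of_eq_ev hxy) hy,
    hχ.map_unit_eq_one _ hxy, one_mul]

lemma map_inv_mul_self (hχ : IsUnramifiedChar v χ) {x : F} (hx : x ≠ 0) :
    χ x⁻¹ * χ x = 1 := by
  rw [← hχ.map_mul _ _ (inv_ne_zero hx) hx, inv_mul_cancel₀ hx,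
    hχ.map_unit_eq_one 1 v.map_one_eq_ev]

lemma map_inv_unit_eq_one (hχ : IsUnramifiedChar v χ) {x : F} (hx : v x = ev 0) :
    χ x⁻¹ = 1 :=
  hχ.map_unit_eq_one _ (v.map_inv_eq_ev hx)

end IsUnramifiedChar

lemma det_tmat (a b c x y : F) : (tmat a b c x y).det = x ^ 2 - b * x * y + a * c * y ^ 2 := by
  rw [tmat, Matrix.det_fin_two_of]; ring

lemma tmat_mul_mul (a b c s x y : F) : tmat a b c (s * x) (s * y) = s • tmat a b c x y := by
  ext i j; fin_cases i <;> fin_cases j <;> simp [tmat] <;> ring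

lemma tmat_one_zero (a b c : F) : tmat a b c 1 0 = 1 := by
  ext i j; fin_cases i <;> fin_cases j <;> simp [tmat]

lemma mem_iwahori_of_le {v : Valuation F Zm0} {p q s t : F} (hp : v p ≤ ev 0) (hq : v q ≤ ev 0)
    (hs : v s ≤ ev 1) (ht : v t ≤ ev 0) (hdet : v (p * t - q * s) = ev 0) :
    !![p, q; s, t] ∈ Iwahori v := by
  refine ⟨⟨fun i j => ?_, by rwa [Matrix.det_fin_two_of]⟩, by simpa using hs⟩
  fin_cases i <;> fin_cases j
  exacts [hp, hq, v.le_ev_of_le hs, ht]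

lemma lower_mem_iwahori {v : Valuation F Zm0} {u : F} (hu : v u ≤ ev 1) :
    !![1, 0; u, 1] ∈ Iwahori v :=
  mem_iwahori_of_le v.map_one_eq_ev.le v.map_zero_le_ev hu v.map_one_eq_ev.le
    (by rw [mul_one, zero_mul, sub_zero, v.map_one_eq_ev])

/-- The conditions (E), (N), (A) on `B`, with `Ω = χ ∘ det`. -/
structure IsToricNewform (v : Valuation F Zm0) (ϖ a b c : F) (χ : F → ℂ)
    (B : Matrix (Fin 2) (Fin 2) F → ℂ) : Prop where
  map_mul : ∀ t g k, t ∈ TSet a b c → k ∈ Iwahori v → B (t * g * k) = χ t.det * B g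
  sum_lower : ∀ R, IsResidueSystem v R → ∀ g,
    ∑ u ∈ R, B (g * !![1, 0; u, 1]) = -B (g * wmat F)
  map_mul_atkinLehner : ∀ g, B (g * !![0, 1; ϖ, 0]) = -(χ ϖ) * B g

namespace IsToricNewform

variable {v : Valuation F Zm0} {ϖ a b c : F} {χ : F → ℂ}
  {B : Matrix (Fin 2) (Fin 2) F → ℂ} {g g' k : Matrix (Fin 2) (Fin 2) F}

lemma map_tmat_mul (hB : IsToricNewform v ϖ a b c χ B) {x y : F}
    (hxy : x ^ 2 - b * x * y + a * c * y ^ 2 ≠ 0) (hk : k ∈ Iwahori v)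
    (h : tmat a b c x y * g * k = g') : B g' = χ (x ^ 2 - b * x * y + a * c * y ^ 2) * B g := by
  rw [← h, hB.map_mul _ g k ⟨x, y, hxy, rfl⟩ hk, det_tmat]

lemma map_of_tmat_mul_eq_smul (hB : IsToricNewform v ϖ a b c χ B) {x y N : F} (hN : N ≠ 0)
    (hxy : x ^ 2 - b * x * y + a * c * y ^ 2 = N) (hk : k ∈ Iwahori v)
    (h : tmat a b c x y * g * k = N • g') : B g' = χ N⁻¹ * B g := by
  have hnorm :
      (N⁻¹ * x) ^ 2 - b * (N⁻¹ * x) * (N⁻¹ * y) + a * c * (N⁻¹ * y) ^ 2 = N⁻¹ := by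
    calc _ = N⁻¹ ^ 2 * (x ^ 2 - b * x * y + a * c * y ^ 2) := by ring
      _ = N⁻¹ := by rw [hxy]; field_simp
  have key : tmat a b c (N⁻¹ * x) (N⁻¹ * y) * g * k = g' := by
    rw [tmat_mul_mul, smul_mul_assoc, smul_mul_assoc, h, smul_smul, inv_mul_cancel₀ hN, one_smul]
  simpa only [hnorm] using hB.map_tmat_mul (by rw [hnorm]; exact inv_ne_zero hN) hk key

lemma map_mul_of_mem_iwahori (hB : IsToricNewform v ϖ a b c χ B) (hχ : IsUnramifiedChar v χ)
    (hk : k ∈ Iwahori v) : B (g * k) = B g := by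
  have h := hB.map_tmat_mul (x := 1) (y := 0) (g := g) (by norm_num) hk rfl
  rwa [tmat_one_zero, one_mul, show (1 : F) ^ 2 - b * 1 * 0 + a * c * 0 ^ 2 = 1 by ring,
    hχ.map_unit_eq_one 1 v.map_one_eq_ev, one_mul] at h

lemma map_mul_lower_congr (hB : IsToricNewform v ϖ a b c χ B) (hχ : IsUnramifiedChar v χ)
    {u u' : F} (h : v (u - u') ≤ ev 1) :
    B (g * !![1, 0; u, 1]) = B (g * !![1, 0; u', 1]) := by
  have hu : !![1, 0; u, 1] = !![1, 0; u', 1] * !![(1 : F), 0; u - u', 1] := by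
    ext i j; fin_cases i <;> fin_cases j <;> simp
  rw [hu, ← mul_assoc, hB.map_mul_of_mem_iwahori hχ (lower_mem_iwahori h)]

lemma sum_sub_map_mul_w (hB : IsToricNewform v ϖ a b c χ B) {R : Finset F}
    (hR : IsResidueSystem v R) (g : Matrix (Fin 2) (Fin 2) F) :
    ∑ u ∈ R, (B (g * !![1, 0; u, 1]) - B (g * wmat F)) = -(R.card + 1) * B (g * wmat F) := by
  rw [Finset.sum_sub_distrib, hB.sum_lower R hR, Finset.sum_const, nsmul_eq_mul]; ring

lemma map_mul_lower_eq_neg_card_mul (hB : IsToricNewform v ϖ a b c χ B)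
    (hχ : IsUnramifiedChar v χ) {R : Finset F} (hR : IsResidueSystem v R) {u₀ : F}
    (hu₀ : v u₀ ≤ ev 0) (hoff : ∀ u, v u ≤ ev 0 → v (u - u₀) = ev 0 →
      B (g * !![1, 0; u, 1]) = B (g * wmat F)) :
    B (g * !![1, 0; u₀, 1]) = -R.card * B (g * wmat F) := by
  obtain ⟨ρ, hρR, hρ, hoffρ⟩ := hR.exists_mem_forall_ne hu₀
  have hsum := hB.sum_sub_map_mul_w hR g
  rw [Finset.sum_eq_single_of_mem ρ hρR fun r hr hrρ => by
      rw [hoff r (hR.1 r hr) (hoffρ r hr hrρ), sub_self],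
    hB.map_mul_lower_congr hχ hρ] at hsum
  linear_combination hsum

lemma map_mul_lower_add_map_mul_lower (hB : IsToricNewform v ϖ a b c χ B)
    (hχ : IsUnramifiedChar v χ) {R : Finset F} (hR : IsResidueSystem v R) {u₁ u₂ : F}
    (hu₁ : v u₁ ≤ ev 0) (hu₂ : v u₂ ≤ ev 0) (hu₁₂ : v (u₁ - u₂) = ev 0)
    (hoff : ∀ u, v u ≤ ev 0 → v (u - u₁) = ev 0 → v (u - u₂) = ev 0 →
      B (g * !![1, 0; u, 1]) = B (g * wmat F)) :
    B (g * !![1, 0; u₁, 1]) + B (g * !![1, 0; u₂, 1]) = -(R.card - 1) * B (g * wmat F) := by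
  obtain ⟨ρ₁, hρ₁R, hρ₁, hoff₁⟩ := hR.exists_mem_forall_ne hu₁
  obtain ⟨ρ₂, hρ₂R, hρ₂, hoff₂⟩ := hR.exists_mem_forall_ne hu₂
  have hρ₁₂ : ρ₁ ≠ ρ₂ := by
    rintro rfl
    have h := v.map_sub_le hρ₂ hρ₁
    rw [sub_sub_sub_cancel_left, hu₁₂, ev_le_ev] at h
    norm_num at h
  have hsum := hB.sum_sub_map_mul_w hR g
  rw [Finset.sum_eq_add_of_mem ρ₁ ρ₂ hρ₁R hρ₂R hρ₁₂ fun r hr hne => by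
      rw [hoff r (hR.1 r hr) (hoff₁ r hr hne.1) (hoff₂ r hr hne.2), sub_self],
    hB.map_mul_lower_congr hχ hρ₁, hB.map_mul_lower_congr hχ hρ₂] at hsum
  linear_combination hsum

lemma map_lower_eq_map_w (hB : IsToricNewform v ϖ a b c χ B) (hχ : IsUnramifiedChar v χ)
    (ha : v a ≤ ev 0) (hb : v b ≤ ev 0) (hc : v c = ev 0) {u : F} (hu : v u ≤ ev 0)
    (hQ : v ((c * u) ^ 2 + b * (c * u) + a * c) = ev 0) :
    B !![1, 0; u, 1] = B (wmat F) := by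
  have hk : !![-c, c * u + b; 0, -(a + b * u + c * u ^ 2)] ∈ Iwahori v := by
    refine mem_iwahori_of_le (by rw [v.map_neg]; exact hc.le)
      (v.map_add_le (v.map_mul_le_ev hc.le hu) hb) v.map_zero_le_ev ?_ ?_
    · rw [v.map_neg]
      exact v.map_add_le (v.map_add_le ha (v.map_mul_le_ev hb hu))
        (v.map_mul_le_ev hc.le (v.map_sq_le_ev hu))
    · rwa [show -c * -(a + b * u + c * u ^ 2) - (c * u + b) * 0
        = (c * u) ^ 2 + b * (c * u) + a * c by ring]
  have key : tmat a b c (c * u) (-1) * !![1, 0; u, 1]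
      * !![-c, c * u + b; 0, -(a + b * u + c * u ^ 2)]
      = ((c * u) ^ 2 + b * (c * u) + a * c) • wmat F := by
    ext i j; fin_cases i <;> fin_cases j <;> simp [tmat, wmat, Matrix.mul_apply] <;> ring
  rw [hB.map_of_tmat_mul_eq_smul (v.ne_zero_of_eq_ev hQ) (by ring) hk key,
    hχ.map_inv_unit_eq_one hQ, one_mul]

lemma map_w_eq_zero_of_residually_inert (hB : IsToricNewform v ϖ a b c χ B)
    (hχ : IsUnramifiedChar v χ) (ha : v a ≤ ev 0) (hb : v b ≤ ev 0) (hc : v c = ev 0)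
    {R : Finset F} (hR : IsResidueSystem v R)
    (hQ : ∀ z, v z ≤ ev 0 → v (z ^ 2 + b * z + a * c) = ev 0) :
    B (wmat F) = 0 := by
  have hall : ∀ u, v u ≤ ev 0 → B (1 * !![1, 0; u, 1]) = B (1 * wmat F) := fun u hu => by
    rw [one_mul, one_mul,
      hB.map_lower_eq_map_w hχ ha hb hc hu (hQ _ (v.map_mul_le_ev hc.le hu))]
  have h := hB.map_mul_lower_eq_neg_card_mul hχ hR v.map_zero_le_ev fun u hu _ => hall u hu
  rw [hall 0 v.map_zero_le_ev, one_mul] at h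
  have h' : ((R.card : ℂ) + 1) * B (wmat F) = 0 := by linear_combination h
  exact (mul_eq_zero.mp h').resolve_left (Nat.cast_add_one_ne_zero _)

lemma map_lower_add_map_lower_eq_zero (hB : IsToricNewform v ϖ a b c χ B)
    (hχ : IsUnramifiedChar v χ) (hϖ : v ϖ = ev 1) (hc : v c = ev 0) {r : F}
    (he : v (r ^ 2 + b * r + a * c) = ev 1) :
    B !![1, 0; r / c, 1] + B !![1, 0; (-b - r) / c, 1] = 0 := by
  set e := r ^ 2 + b * r + a * c
  have hc0 := v.ne_zero_of_eq_ev hc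
  have hϖ0 := v.ne_zero_of_eq_ev hϖ
  have hk : !![-(e / (c * ϖ)), 0; 0, c] ∈ Iwahori v := by
    have hunit : v (e / (c * ϖ)) = ev 0 := v.map_div_eq_ev he (v.map_mul_eq_ev hc hϖ)
    refine mem_iwahori_of_le (by rw [v.map_neg]; exact hunit.le) v.map_zero_le_ev
      v.map_zero_le_ev hc.le ?_
    rw [mul_zero, sub_zero, neg_mul, v.map_neg]
    exact v.map_mul_eq_ev hunit hc
  have key : tmat a b c (-b - r) (-1) * (!![1, 0; (-b - r) / c, 1] * !![0, 1; ϖ, 0])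
      * !![-(e / (c * ϖ)), 0; 0, c] = e • !![1, 0; r / c, 1] := by
    ext i j; fin_cases i <;> fin_cases j <;>
      simp [tmat, Matrix.mul_apply, e, -mul_eq_zero] <;> field_simp <;> ring
  rw [hB.map_of_tmat_mul_eq_smul (v.ne_zero_of_eq_ev he) (by ring) hk key,
    hB.map_mul_atkinLehner, ← hχ.map_eq_of_val_eq hϖ0 (he.trans hϖ.symm)]
  linear_combination (-B !![1, 0; (-b - r) / c, 1]) * hχ.map_inv_mul_self (v.ne_zero_of_eq_ev he)

lemma map_w_eq_zero_of_residually_split (hB : IsToricNewform v ϖ a b c χ B)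
    (hχ : IsUnramifiedChar v χ) (hϖ : v ϖ = ev 1) (ha : v a ≤ ev 0) (hb : v b ≤ ev 0)
    (hc : v c = ev 0) {R : Finset F} (hR : IsResidueSystem v R) {r : F} (hr : v r ≤ ev 0)
    (he : v (r ^ 2 + b * r + a * c) = ev 1) (hδ : v (2 * r + b) = ev 0) :
    B (wmat F) = 0 := by
  have hc0 := v.ne_zero_of_eq_ev hc
  have hu₁ : v (r / c) ≤ ev 0 := v.map_div_le_ev hr hc
  have hu₂ : v ((-b - r) / c) ≤ ev 0 := by
    have h : v (-b - r) ≤ ev 0 := by rw [← neg_add', v.map_neg]; exact v.map_add_le hb hr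
    exact v.map_div_le_ev h hc
  have hu₁₂ : v (r / c - (-b - r) / c) = ev 0 := by
    rw [← sub_div, show r - (-b - r) = 2 * r + b by ring]; exact v.map_div_eq_ev hδ hc
  have hoff : ∀ u, v u ≤ ev 0 → v (u - r / c) = ev 0 → v (u - (-b - r) / c) = ev 0 →
      B (1 * !![1, 0; u, 1]) = B (1 * wmat F) := fun u hu h₁ h₂ => by
    rw [one_mul, one_mul]
    refine hB.map_lower_eq_map_w hχ ha hb hc hu ?_
    rw [show (c * u) ^ 2 + b * (c * u) + a * c
      = c * (u - r / c) * (c * (u - (-b - r) / c)) + (r ^ 2 + b * r + a * c) by field_simp; ring]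
    exact v.map_add_eq_ev
      (v.map_mul_eq_ev (v.map_mul_eq_ev hc h₁) (v.map_mul_eq_ev hc h₂)) he.le
  have hsum := hB.map_mul_lower_add_map_mul_lower hχ hR hu₁ hu₂ hu₁₂ hoff
  simp only [one_mul, hB.map_lower_add_map_lower_eq_zero hχ hϖ hc he] at hsum
  have hq : (R.card : ℂ) - 1 ≠ 0 := sub_ne_zero.mpr (by exact_mod_cast hR.one_lt_card.ne')
  have h : ((R.card : ℂ) - 1) * B (wmat F) = 0 := by linear_combination hsum
  exact (mul_eq_zero.mp h).resolve_left hq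

lemma map_lower_eq_of_residual_double_root (hB : IsToricNewform v ϖ a b c χ B)
    (hχ : IsUnramifiedChar v χ) (ha : v a ≤ ev 0) (hb : v b ≤ ev 0) (hc : v c = ev 0)
    {R : Finset F} (hR : IsResidueSystem v R) {r : F} (hr : v r ≤ ev 0)
    (he : v (r ^ 2 + b * r + a * c) ≤ ev 1) (hδ : v (2 * r + b) ≤ ev 1) :
    B !![1, 0; r / c, 1] = -R.card * B (wmat F) := by
  have hc0 := v.ne_zero_of_eq_ev hc
  have hoff : ∀ u, v u ≤ ev 0 → v (u - r / c) = ev 0 →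
      B (1 * !![1, 0; u, 1]) = B (1 * wmat F) := fun u hu hur => by
    have hcu : v (c * (u - r / c)) = ev 0 := v.map_mul_eq_ev hc hur
    rw [one_mul, one_mul]
    refine hB.map_lower_eq_map_w hχ ha hb hc hu ?_
    rw [show (c * u) ^ 2 + b * (c * u) + a * c = (c * (u - r / c)) ^ 2
      + ((2 * r + b) * (c * (u - r / c)) + (r ^ 2 + b * r + a * c)) by field_simp; ring]
    exact v.map_add_eq_ev (v.map_sq_eq_ev hcu)
      (v.map_add_le (v.map_mul_le_ev hδ hcu.le) he)
  simpa only [one_mul] using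
    hB.map_mul_lower_eq_neg_card_mul hχ hR (v.map_div_le_ev hr hc) hoff

lemma map_lower_mul_atkinLehner_eq_of_residual_double_root (hB : IsToricNewform v ϖ a b c χ B)
    (hχ : IsUnramifiedChar v χ) (ha : v a ≤ ev 0) (hb : v b ≤ ev 0) (hc : v c = ev 0)
    {R : Finset F} (hR : IsResidueSystem v R) {r : F} (hr : v r ≤ ev 0)
    (he : v (r ^ 2 + b * r + a * c) ≤ ev 1) (hδ : v (2 * r + b) ≤ ev 1) :
    B (!![1, 0; r / c, 1] * !![0, 1; ϖ, 0]) = R.card * χ ϖ * B (wmat F) := by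
  rw [hB.map_mul_atkinLehner, hB.map_lower_eq_of_residual_double_root hχ ha hb hc hR hr he hδ]
  ring

lemma map_mul_lower_eq_map_mul_w_of_ramified (hB : IsToricNewform v ϖ a b c χ B)
    (hχ : IsUnramifiedChar v χ) (hϖ : v ϖ = ev 1) (hb : v b ≤ ev 0) (hc : v c = ev 0)
    {r : F} (hr : v r ≤ ev 0) (he : v (r ^ 2 + b * r + a * c) = ev 1)
    (hδ : v (2 * r + b) ≤ ev 1) {u : F} (hu : v u = ev 0) :
    B (!![1, 0; r / c, 1] * !![0, 1; ϖ, 0] * !![1, 0; u, 1])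
      = B (!![1, 0; r / c, 1] * !![0, 1; ϖ, 0] * wmat F) := by
  have hc0 := v.ne_zero_of_eq_ev hc
  have hϖ0 := v.ne_zero_of_eq_ev hϖ
  set e := r ^ 2 + b * r + a * c
  have hp : v (e / (c * ϖ)) = ev 0 := v.map_div_eq_ev he (v.map_mul_eq_ev hc hϖ)
  set m := u * (e / (c * ϖ))
  have hm : v m = ev 0 := v.map_mul_eq_ev hu hp
  have hN : v ((m + r) ^ 2 + b * (m + r) + a * c) = ev 0 := by
    rw [show (m + r) ^ 2 + b * (m + r) + a * c = m ^ 2 + ((2 * r + b) * m + e) by ring]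
    exact v.map_add_eq_ev (v.map_sq_eq_ev hm) (v.map_add_le (v.map_mul_le_ev hδ hm.le) he.le)
  have hk₂₂ : v (c * ϖ + u * (m + (2 * r + b))) = ev 0 := by
    rw [show c * ϖ + u * (m + (2 * r + b)) = u * m + (u * (2 * r + b) + c * ϖ) by ring]
    exact v.map_add_eq_ev (v.map_mul_eq_ev hu hm)
      (v.map_add_le (v.map_mul_le_ev hu.le hδ) (v.map_mul_eq_ev hc hϖ).le)
  have hk : !![e / (c * ϖ), -(m + (2 * r + b)); 0, c * ϖ + u * (m + (2 * r + b))]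
      ∈ Iwahori v := by
    refine mem_iwahori_of_le hp.le ?_ v.map_zero_le_ev hk₂₂.le ?_
    · rw [v.map_neg]
      exact v.map_add_le hm.le (v.map_add_le (v.map_mul_le_ev (v.map_ofNat_le_ev 2) hr) hb)
    · rw [mul_zero, sub_zero]; exact v.map_mul_eq_ev hp hk₂₂
  have key : tmat a b c (-(m + r + b)) (-1) * (!![1, 0; r / c, 1] * !![0, 1; ϖ, 0]
      * !![1, 0; u, 1]) * !![e / (c * ϖ), -(m + (2 * r + b)); 0, c * ϖ + u * (m + (2 * r + b))]
      = ((m + r) ^ 2 + b * (m + r) + a * c)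
        • (!![1, 0; r / c, 1] * !![0, 1; ϖ, 0] * wmat F) := by
    ext i j; fin_cases i <;> fin_cases j <;>
      simp [tmat, wmat, Matrix.mul_apply, e, m, -mul_eq_zero] <;> field_simp <;> ring
  rw [hB.map_of_tmat_mul_eq_smul (v.ne_zero_of_eq_ev hN) (by ring) hk key,
    hχ.map_inv_unit_eq_one hN, one_mul]

lemma map_of_tmat_neg_mul_of_ramified (hB : IsToricNewform v ϖ a b c χ B)
    (hχ : IsUnramifiedChar v χ) (hϖ : v ϖ = ev 1) {r : F}
    (he : v (r ^ 2 + b * r + a * c) = ev 1) (hk : k ∈ Iwahori v)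
    (h : tmat a b c (-r) 1 * g * k = g') : B g' = χ ϖ * B g := by
  have hnorm : (-r) ^ 2 - b * -r * 1 + a * c * 1 ^ 2 = r ^ 2 + b * r + a * c := by ring
  rw [hB.map_tmat_mul (by rw [hnorm]; exact v.ne_zero_of_eq_ev he) hk h, hnorm,
    hχ.map_eq_of_val_eq (v.ne_zero_of_eq_ev hϖ) (he.trans hϖ.symm)]

lemma map_mul_w_eq_of_ramified_of_le_ev_two (hB : IsToricNewform v ϖ a b c χ B)
    (hχ : IsUnramifiedChar v χ) (hϖ : v ϖ = ev 1) (hc : v c = ev 0) {r : F} (hr : v r ≤ ev 0)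
    (he : v (r ^ 2 + b * r + a * c) = ev 1) (hδ : v (2 * r + b) ≤ ev 2) :
    B (!![1, 0; r / c, 1] * !![0, 1; ϖ, 0] * wmat F) = χ ϖ * B (wmat F) := by
  have hc0 := v.ne_zero_of_eq_ev hc
  have hϖ0 := v.ne_zero_of_eq_ev hϖ
  have hQ := he
  generalize he_def : r ^ 2 + b * r + a * c = e at he
  generalize hδ_def : 2 * r + b = δ at hδ
  have he0 := v.ne_zero_of_eq_ev he
  have hk : !![(e - δ * r) / (c * e), r * ϖ / e; δ / e, -(c * ϖ / e)] ∈ Iwahori v := by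
    refine mem_iwahori_of_le (v.map_div_le_ev
        (v.map_sub_le he.le (v.le_ev_of_le (n := 1) (v.map_mul_le_ev hδ hr)))
        (v.map_mul_eq_ev hc he))
      (v.map_div_le_ev (v.map_mul_le_ev hr hϖ.le) he) (v.map_div_le_ev hδ he)
      (by rw [v.map_neg]; exact (v.map_div_eq_ev (v.map_mul_eq_ev hc hϖ) he).le) ?_
    rw [show (e - δ * r) / (c * e) * -(c * ϖ / e) - r * ϖ / e * (δ / e) = -(ϖ / e) by
      field_simp; ring, v.map_neg]
    exact v.map_div_eq_ev hϖ he
  refine hB.map_of_tmat_neg_mul_of_ramified hχ hϖ hQ hk ?_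
  ext i j; fin_cases i <;> fin_cases j <;>
    simp [tmat, wmat, Matrix.mul_apply, -mul_eq_zero] <;> field_simp <;>
    subst he_def hδ_def <;> ring

lemma map_mul_lower_eq_of_ramified_of_eq_ev_one (hB : IsToricNewform v ϖ a b c χ B)
    (hχ : IsUnramifiedChar v χ) (hϖ : v ϖ = ev 1) (hc : v c = ev 0) {r : F} (hr : v r ≤ ev 0)
    (he : v (r ^ 2 + b * r + a * c) = ev 1) (hδ : v (2 * r + b) = ev 1) :
    B (!![1, 0; r / c, 1] * !![0, 1; ϖ, 0] * !![1, 0; -(c * ϖ) / (2 * r + b), 1])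
      = χ ϖ * B (wmat F) := by
  have hc0 := v.ne_zero_of_eq_ev hc
  have hϖ0 := v.ne_zero_of_eq_ev hϖ
  have hQ := he
  generalize he_def : r ^ 2 + b * r + a * c = e at he
  generalize hδ_def : 2 * r + b = δ at hδ ⊢
  have he0 := v.ne_zero_of_eq_ev he
  have hδ0 := v.ne_zero_of_eq_ev hδ
  have hk : !![ϖ / δ, (δ * r - e) / (c * e); 0, -(δ / e)] ∈ Iwahori v := by
    refine mem_iwahori_of_le (v.map_div_eq_ev hϖ hδ).le
      (v.map_div_le_ev (v.map_sub_le (v.map_mul_le_ev hδ.le hr) he.le) (v.map_mul_eq_ev hc he))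
      v.map_zero_le_ev (by rw [v.map_neg]; exact (v.map_div_eq_ev hδ he).le) ?_
    rw [mul_zero, sub_zero, show ϖ / δ * -(δ / e) = -(ϖ / e) by field_simp, v.map_neg]
    exact v.map_div_eq_ev hϖ he
  refine hB.map_of_tmat_neg_mul_of_ramified hχ hϖ hQ hk ?_
  ext i j; fin_cases i <;> fin_cases j <;>
    simp [tmat, wmat, Matrix.mul_apply, -mul_eq_zero] <;> field_simp <;>
    subst he_def hδ_def <;> ring

lemma map_mul_w_eq_of_ramified (hB : IsToricNewform v ϖ a b c χ B)
    (hχ : IsUnramifiedChar v χ) (hϖ : v ϖ = ev 1) (hb : v b ≤ ev 0) (hc : v c = ev 0)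
    {r : F} (hr : v r ≤ ev 0) (he : v (r ^ 2 + b * r + a * c) = ev 1)
    (hδ : v (2 * r + b) ≤ ev 1) :
    B (!![1, 0; r / c, 1] * !![0, 1; ϖ, 0] * wmat F) = χ ϖ * B (wmat F) := by
  rcases eq_ev_or_le_ev_add_one hδ with hδ | hδ
  · -- when `v(2r + b) = 1` the matrix relating `w` to `n(r/c)·[[0, 1], [ϖ, 0]]·w` is not
    -- in `I`; go through the equivalent edge `u = -cϖ/(2r + b)` instead
    have hu : v (-(c * ϖ) / (2 * r + b)) = ev 0 := by
      rw [neg_div, v.map_neg]; exact v.map_div_eq_ev (v.map_mul_eq_ev hc hϖ) hδ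
    rw [← hB.map_mul_lower_eq_map_mul_w_of_ramified hχ hϖ hb hc hr he hδ.le hu]
    exact hB.map_mul_lower_eq_of_ramified_of_eq_ev_one hχ hϖ hc hr he hδ
  · exact hB.map_mul_w_eq_of_ramified_of_le_ev_two hχ hϖ hc hr he hδ

lemma map_w_eq_zero_of_ramified (hB : IsToricNewform v ϖ a b c χ B)
    (hχ : IsUnramifiedChar v χ) (hϖ : v ϖ = ev 1) (ha : v a ≤ ev 0) (hb : v b ≤ ev 0)
    (hc : v c = ev 0) {R : Finset F} (hR : IsResidueSystem v R) {r : F} (hr : v r ≤ ev 0)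
    (he : v (r ^ 2 + b * r + a * c) = ev 1) (hδ : v (2 * r + b) ≤ ev 1) :
    B (wmat F) = 0 := by
  set g := !![1, 0; r / c, 1] * !![0, 1; ϖ, 0]
  have hg := hB.map_lower_mul_atkinLehner_eq_of_residual_double_root hχ ha hb hc hR hr he.le hδ
  have hgw := hB.map_mul_w_eq_of_ramified hχ hϖ hb hc hr he hδ
  have hnext := hB.map_mul_lower_eq_neg_card_mul hχ hR (g := g) v.map_zero_le_ev fun u _ hu =>
    hB.map_mul_lower_eq_map_mul_w_of_ramified hχ hϖ hb hc hr he hδ (sub_zero u ▸ hu)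
  rw [← Matrix.one_fin_two, mul_one, hg, hgw] at hnext
  have h : (2 * R.card * χ ϖ) * B (wmat F) = 0 := by linear_combination hnext
  have hq : (R.card : ℂ) ≠ 0 := Nat.cast_ne_zero.mpr (by have := hR.one_lt_card; omega)
  exact (mul_eq_zero.mp h).resolve_left
    (mul_ne_zero (mul_ne_zero two_ne_zero hq) (hχ.ne_zero ϖ (v.ne_zero_of_eq_ev hϖ)))

lemma comp_mul_left (hB : IsToricNewform v ϖ a b c χ B) (hϖ : ϖ ≠ 0) (hc : c ≠ 0) (r : F) :
    IsToricNewform v ϖ ((r ^ 2 + b * r + a * c) / (c * ϖ ^ 2)) ((2 * r + b) / ϖ) c χ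
      (fun g => B (!![1, 0; r / c, ϖ] * g)) where
  map_mul := by
    rintro _ g k ⟨x, y, hxy, rfl⟩ hk
    have hnorm : (x - r * y / ϖ) ^ 2 - b * (x - r * y / ϖ) * (y / ϖ) + a * c * (y / ϖ) ^ 2
        = x ^ 2 - (2 * r + b) / ϖ * x * y
          + (r ^ 2 + b * r + a * c) / (c * ϖ ^ 2) * c * y ^ 2 := by
      field_simp; ring
    have hconj : !![1, 0; r / c, ϖ] * tmat ((r ^ 2 + b * r + a * c) / (c * ϖ ^ 2))
        ((2 * r + b) / ϖ) c x y = tmat a b c (x - r * y / ϖ) (y / ϖ) * !![1, 0; r / c, ϖ] := by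
      ext i j; fin_cases i <;> fin_cases j <;>
        simp [tmat, Matrix.mul_apply, -mul_eq_zero] <;> field_simp <;> ring
    rw [det_tmat, ← hnorm]
    exact hB.map_tmat_mul (hnorm ▸ hxy) hk (by simp only [← mul_assoc, hconj])
  sum_lower R hR g := by simpa only [mul_assoc] using hB.sum_lower R hR (!![1, 0; r / c, ϖ] * g)
  map_mul_atkinLehner g := by
    simpa only [mul_assoc] using hB.map_mul_atkinLehner (!![1, 0; r / c, ϖ] * g)

lemma map_w_eq_zero_of_map_comp_mul_left (hB : IsToricNewform v ϖ a b c χ B)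
    (hχ : IsUnramifiedChar v χ) (hϖ : v ϖ = ev 1) (ha : v a ≤ ev 0) (hb : v b ≤ ev 0)
    (hc : v c = ev 0) {R : Finset F} (hR : IsResidueSystem v R) {r : F} (hr : v r ≤ ev 0)
    (he : v (r ^ 2 + b * r + a * c) ≤ ev 1) (hδ : v (2 * r + b) ≤ ev 1)
    (h : B (!![1, 0; r / c, ϖ] * wmat F) = 0) :
    B (wmat F) = 0 := by
  have hw : !![1, 0; r / c, ϖ] * wmat F
      = !![1, 0; r / c, 1] * !![0, 1; ϖ, 0] * !![-1, 0; 0, 1] := by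
    ext i j; fin_cases i <;> fin_cases j <;> simp [wmat, Matrix.mul_apply]
  have hk : !![(-1 : F), 0; 0, 1] ∈ Iwahori v :=
    mem_iwahori_of_le (by rw [v.map_neg, v.map_one_eq_ev]) v.map_zero_le_ev v.map_zero_le_ev
      v.map_one_eq_ev.le (by rw [mul_one, mul_zero, sub_zero, v.map_neg, v.map_one_eq_ev])
  rw [hw, hB.map_mul_of_mem_iwahori hχ hk,
    hB.map_lower_mul_atkinLehner_eq_of_residual_double_root hχ ha hb hc hR hr he hδ] at h
  have hq : (R.card : ℂ) ≠ 0 := Nat.cast_ne_zero.mpr (by have := hR.one_lt_card; omega)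
  exact (mul_eq_zero.mp h).resolve_left (mul_ne_zero hq (hχ.ne_zero ϖ (v.ne_zero_of_eq_ev hϖ)))

theorem map_w_eq_zero (hB : IsToricNewform v ϖ a b c χ B) (hχ : IsUnramifiedChar v χ)
    (hϖ : v ϖ = ev 1) (ha : v a ≤ ev 0) (hb : v b ≤ ev 0) (hc : v c = ev 0)
    {R : Finset F} (hR : IsResidueSystem v R) (hd : b ^ 2 - 4 * (a * c) ≠ 0) :
    B (wmat F) = 0 := by
  obtain ⟨n, hn⟩ := exists_val_disc_eq ha hb hc.le hd
  induction n using Nat.strong_induction_on generalizing a b B with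
  | _ n ih =>
  rcases quadratic_residual_cases hϖ hb (v.map_mul_le_ev ha hc.le) with
    hQ | ⟨r, hr, he, hδ⟩ | ⟨r, hr, he, hδ⟩
  · exact hB.map_w_eq_zero_of_residually_inert hχ ha hb hc hR hQ
  · exact hB.map_w_eq_zero_of_residually_split hχ hϖ ha hb hc hR hr he hδ
  rcases eq_ev_or_le_ev_add_one he with he | he
  · exact hB.map_w_eq_zero_of_ramified hχ hϖ ha hb hc hR hr he hδ
  refine hB.map_w_eq_zero_of_map_comp_mul_left hχ hϖ ha hb hc hR hr (v.le_ev_of_le he) hδ ?_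
  have hϖ0 := v.ne_zero_of_eq_ev hϖ
  have hc0 := v.ne_zero_of_eq_ev hc
  have hdisc : ((2 * r + b) / ϖ) ^ 2 - 4 * ((r ^ 2 + b * r + a * c) / (c * ϖ ^ 2) * c)
      = (b ^ 2 - 4 * (a * c)) / ϖ ^ 2 := by
    field_simp; ring
  have ha' := v.map_div_le_ev he (v.map_mul_eq_ev hc (v.map_sq_eq_ev hϖ))
  have hb' := v.map_div_le_ev hδ hϖ
  have hd' : ((2 * r + b) / ϖ) ^ 2 - 4 * ((r ^ 2 + b * r + a * c) / (c * ϖ ^ 2) * c) ≠ 0 := by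
    rw [hdisc]; exact div_ne_zero hd (pow_ne_zero 2 hϖ0)
  obtain ⟨n', hn'⟩ := exists_val_disc_eq ha' hb' hc.le hd'
  have hlt : n' < n := by
    rw [hdisc, v.map_div_eq_ev hn (v.map_sq_eq_ev hϖ)] at hn'
    have := ev_injective hn'
    omega
  exact ih n' hlt (hB.comp_mul_left hϖ0 hc0 r) ha' hb' hd' hn'

end IsToricNewform

theorem stmt13_general
    (v : Valuation F Zm0) (ϖ : F) (hϖ : v ϖ = ev 1)
    (a b c : F)
    (hao : v a ≤ ev 0) (hbo : v b ≤ ev 0) (hc : v c = ev 0)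
    (hd0 : b ^ 2 - 4 * (a * c) ≠ 0)
    -- q is the cardinality of the residue field 𝔬/𝔭 :
    (q : ℕ) (hq : ∃ R : Finset F, R.card = q ∧ (∀ r ∈ R, v r ≤ ev 0) ∧
      ∀ x : F, v x ≤ ev 0 → ∃! r, r ∈ R ∧ v (x - r) ≤ ev 1)
    -- χ : F^× → ℂ^× a homomorphism trivial on 𝔬^× :
    (χ : F → ℂ)
    (hχmul : ∀ x y : F, x ≠ 0 → y ≠ 0 → χ (x * y) = χ x * χ y)
    (hχne : ∀ x : F, x ≠ 0 → χ x ≠ 0)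
    (hχtriv : ∀ u : F, v u = ev 0 → χ u = 1)
    -- Ω is the homomorphism t ↦ χ(det t) on T(F) :
    (Ω : Matrix (Fin 2) (Fin 2) F → ℂ)
    (hΩdef : ∀ t ∈ TSet a b c, Ω t = χ t.det)
    (B : Matrix (Fin 2) (Fin 2) F → ℂ)
    -- (E) equivariance :
    (hE : ∀ t g k, t ∈ TSet a b c → k ∈ Iwahori v → B (t * g * k) = Ω t * B g)
    -- (N) summing over any set of representatives of 𝔬/𝔭 :
    (hN : ∀ R : Finset F, (∀ r ∈ R, v r ≤ ev 0) →
      (∀ x : F, v x ≤ ev 0 → ∃! r, r ∈ R ∧ v (x - r) ≤ ev 1) →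
      ∀ g, (∑ u ∈ R, B (g * !![1, 0; u, 1])) = - B (g * wmat F))
    -- (A) Atkin–Lehner eigenvector property :
    (hA : ∀ g, B (g * !![0, 1; ϖ, 0]) = -(χ ϖ) * B g) :
    B (wmat F) = 0 := by
  obtain ⟨R, -, hR⟩ := hq
  have hB : IsToricNewform v ϖ a b c χ B :=
    { map_mul := fun t g k ht hk => by rw [hE t g k ht hk, hΩdef t ht]
      sum_lower := fun R hR => hN R hR.1 hR.2
      map_mul_atkinLehner := hA }
  exact hB.map_w_eq_zero ⟨hχmul, hχne, hχtriv⟩ hϖ hao hbo hc hR hd0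

/-- if Ω(t) = χ(det t) (so c(Ω) = 0), then B(w) = 0. -/
theorem stmt13
    (v : Valuation F Zm0) (ϖ : F) (hϖ : v ϖ = ev 1)
    (a b c : F)
    (hao : v a ≤ ev 0) (hbo : v b ≤ ev 0) (hc : v c = ev 0)
    (hd0 : b ^ 2 - 4 * (a * c) ≠ 0)
    (hnonsq : ∀ s : F, s ^ 2 ≠ b ^ 2 - 4 * (a * c))
    -- q is the cardinality of the residue field 𝔬/𝔭 :
    (q : ℕ) (hq : ∃ R : Finset F, R.card = q ∧ (∀ r ∈ R, v r ≤ ev 0) ∧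
      ∀ x : F, v x ≤ ev 0 → ∃! r, r ∈ R ∧ v (x - r) ≤ ev 1)
    -- χ : F^× → ℂ^× a homomorphism trivial on 𝔬^× :
    (χ : F → ℂ)
    (hχmul : ∀ x y : F, x ≠ 0 → y ≠ 0 → χ (x * y) = χ x * χ y)
    (hχne : ∀ x : F, x ≠ 0 → χ x ≠ 0)
    (hχtriv : ∀ u : F, v u = ev 0 → χ u = 1)
    -- Ω is the homomorphism t ↦ χ(det t) on T(F) :
    (Ω : Matrix (Fin 2) (Fin 2) F → ℂ)
    (hΩdef : ∀ t ∈ TSet a b c, Ω t = χ t.det)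
    (B : Matrix (Fin 2) (Fin 2) F → ℂ)
    -- (E) equivariance :
    (hE : ∀ t g k, t ∈ TSet a b c → k ∈ Iwahori v → B (t * g * k) = Ω t * B g)
    -- (N) summing over any set of representatives of 𝔬/𝔭 :
    (hN : ∀ R : Finset F, (∀ r ∈ R, v r ≤ ev 0) →
      (∀ x : F, v x ≤ ev 0 → ∃! r, r ∈ R ∧ v (x - r) ≤ ev 1) →
      ∀ g, (∑ u ∈ R, B (g * !![1, 0; u, 1])) = - B (g * wmat F))
    -- (A) Atkin–Lehner eigenvector property :
    (hA : ∀ g, B (g * !![0, 1; ϖ, 0]) = -(χ ϖ) * B g) :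
    B (wmat F) = 0 :=
  stmt13_general v ϖ hϖ a b c hao hbo hc hd0 q hq χ hχmul hχne hχtriv Ω hΩdef B hE hN hA
end
end

section
/- Let C ≥ 1 be an integer and let Ω : T(F) → ℂ^× be a group homomorphism with conductor exponent c(Ω) = C (i.e., Ω is trivial on U_C and, if C ≥ 1, nontrivial on U_{C−1}) and with Ω(u·1) = 1 for all u ∈ o^×. For an integer k with 0 < k ≤ C, the value Ω(t(1, y)) depends only on the class of y modulo p^C for y ∈ o with v(y) = k, and the sum S_k := ∑ Ω(t(1, y))^{−1}, taken over y in any set of representatives of the classes { y ∈ o/p^C : v(y) = k }, satisfies: S_k = 0 if 0 < k < C − 1; S_{C−1} = −1 if C > 1; and S_C = 1. -/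
open Matrix

noncomputable section

variable {F : Type*} [Field F]

lemma ev_zero : ev 0 = 1 := rfl

lemma ev_pow (n : ℕ) : ev 1 ^ n = ev n := by
  rw [ev_eq_exp, ev_eq_exp, ← WithZero.exp_nsmul, nsmul_eq_mul, mul_neg_one]

lemma le_ev_add_one_of_lt {x : Zm0} {n : ℤ} (h : x < ev n) : x ≤ ev (n + 1) := by
  rw [ev_eq_exp] at h ⊢
  rwa [← WithZero.lt_mul_exp_iff_le WithZero.exp_ne_zero, ← WithZero.exp_add, neg_add,
    neg_add_cancel_right]

theorem Finset.sum_eq_zero_of_comp_eq_mul {α R : Type*} [CommRing R] [NoZeroDivisors R]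
    {s : Finset α} {f : α → R} {g : α → α} {μ : R} (hμ : μ ≠ 1) (hg : ∀ x ∈ s, g x ∈ s)
    (hinj : Set.InjOn g s) (hf : ∀ x ∈ s, f (g x) = f x * μ) : ∑ x ∈ s, f x = 0 := by
  have hsurj := ((s.finite_toSet.injOn_iff_bijOn_of_mapsTo hg).mp hinj).surjOn
  have h : (∑ x ∈ s, f x) * μ = ∑ x ∈ s, f x := by
    rw [Finset.sum_mul]
    exact Finset.sum_nbij g hg hinj hsurj fun x hx => (hf x hx).symm
  exact (mul_right_eq_self₀.mp h).resolve_left hμ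

section Torus

variable (a b c : F)

lemma tmat_mul (x y x' y' : F) :
    tmat a b c x y * tmat a b c x' y' =
      tmat a b c (x * x' - a * c * (y * y')) (x * y' + x' * y - b * (y * y')) := by
  ext i j
  fin_cases i, j <;> simp [tmat, Matrix.mul_apply] <;> ring

lemma tmat_det (x y : F) : (tmat a b c x y).det = x ^ 2 - b * x * y + a * c * y ^ 2 := by
  rw [tmat, Matrix.det_fin_two_of]
  ring

lemma tmat_mem_TSet {x y : F} (h : (tmat a b c x y).det ≠ 0) : tmat a b c x y ∈ TSet a b c :=
  ⟨x, y, by rwa [← tmat_det], rfl⟩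

lemma smul_tmat (u x y : F) : u • tmat a b c x y = tmat a b c (u * x) (u * y) := by
  ext i j
  fin_cases i, j <;> simp [tmat] <;> ring

lemma smul_one_eq_tmat (u : F) : u • (1 : Matrix (Fin 2) (Fin 2) F) = tmat a b c u 0 := by
  ext i j
  fin_cases i, j <;> simp [tmat]

lemma tmat_sub_one (x y : F) :
    tmat a b c x y - 1 = !![x - 1, c * y; -(a * y), x - 1 - b * y] := by
  ext i j
  fin_cases i, j <;> simp [tmat, sub_right_comm]

def torusAdd (y z : F) : F := (y + z - b * (y * z)) / (1 - a * c * (y * z))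

variable {a b c}

lemma tmat_one_mul_tmat_one {y z : F} (h : 1 - a * c * (y * z) ≠ 0) :
    tmat a b c 1 y * tmat a b c 1 z =
      (1 - a * c * (y * z)) • tmat a b c 1 (torusAdd a b c y z) := by
  rw [tmat_mul, smul_tmat, torusAdd, mul_div_cancel₀ _ h]
  congr 1 <;> ring

lemma torusAdd_sub_self {y z : F} (h : 1 - a * c * (y * z) ≠ 0) :
    torusAdd a b c y z - y = z * (tmat a b c 1 y).det / (1 - a * c * (y * z)) := by
  rw [torusAdd, tmat_det, eq_div_iff h, sub_mul, div_mul_cancel₀ _ h]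
  ring

lemma torusAdd_sub_torusAdd {y y' z : F} (h : 1 - a * c * (y * z) ≠ 0)
    (h' : 1 - a * c * (y' * z) ≠ 0) :
    torusAdd a b c y z - torusAdd a b c y' z =
      (y - y') * (tmat a b c 1 z).det / ((1 - a * c * (y * z)) * (1 - a * c * (y' * z))) := by
  rw [torusAdd, torusAdd, tmat_det, div_sub_div _ _ h h']
  congr 1
  ring

lemma torusAdd_div_eq {y w : F} (hN : 1 - b * w + a * c * (w * y) ≠ 0)
    (hw : (tmat a b c 1 w).det ≠ 0) :
    torusAdd a b c w ((y - w) / (1 - b * w + a * c * (w * y))) = y := by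
  set d := (y - w) / (1 - b * w + a * c * (w * y))
  have hd : d * (1 - b * w + a * c * (w * y)) = y - w := div_mul_cancel₀ _ hN
  have hdet : (1 - a * c * (w * d)) * (1 - b * w + a * c * (w * y)) = (tmat a b c 1 w).det := by
    rw [tmat_det]
    linear_combination (-(a * c * w)) * hd
  rw [torusAdd, div_eq_iff (left_ne_zero_of_mul (hdet ▸ hw))]
  linear_combination hd

end Torus

section Valuation

variable {v : Valuation F Zm0}

lemma ne_zero_of_v_eq_ev {x : F} {n : ℤ} (h : v x = ev n) : x ≠ 0 := by
  rintro rfl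
  exact WithZero.exp_ne_zero (h.symm.trans v.map_zero)

lemma v_mul_le_of_le_ev_zero {x y : F} (hx : v x ≤ ev 0) : v (x * y) ≤ v y := by
  rw [v.map_mul]
  exact mul_le_of_le_one_left' hx

lemma v_one_add_eq {w : F} (hw : v w ≤ ev 1) : v (1 + w) = ev 0 :=
  v.map_one_add_of_lt (hw.trans_lt (ev_lt_ev.mpr one_pos))

variable {a b c : F} (hao : v a ≤ ev 0) (hbo : v b ≤ ev 0) (hc : v c = ev 0)
include hao hc

lemma v_ac_mul_le {y z : F} (hy : v y ≤ ev 1) (hz : v z ≤ ev 1) :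
    v (a * c * (y * z)) ≤ ev 1 := by
  rw [mul_assoc, mul_comm y z]
  exact (v_mul_le_of_le_ev_zero hao).trans <| (v_mul_le_of_le_ev_zero hc.le).trans <|
    (v_mul_le_of_le_ev_zero (hz.trans (ev_le_ev.mpr zero_le_one))).trans hy

lemma v_one_sub_ac_mul {y z : F} (hy : v y ≤ ev 1) (hz : v z ≤ ev 1) :
    v (1 - a * c * (y * z)) = ev 0 := by
  rw [sub_eq_add_neg]
  exact v_one_add_eq (by rw [v.map_neg]; exact v_ac_mul_le hao hc hy hz)

include hbo

lemma v_one_sub_b_mul_add_ac_mul {w y : F} (hw : v w ≤ ev 1) (hy : v y ≤ ev 1) :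
    v (1 - b * w + a * c * (w * y)) = ev 0 := by
  rw [sub_eq_add_neg, add_assoc]
  refine v_one_add_eq (v.map_add_le ?_ (v_ac_mul_le hao hc hw hy))
  rw [v.map_neg]
  exact (v_mul_le_of_le_ev_zero hbo).trans hw

lemma v_det_tmat_one {y : F} (hy : v y ≤ ev 1) : v (tmat a b c 1 y).det = ev 0 := by
  rw [tmat_det, one_pow, mul_one, sq]
  exact v_one_sub_b_mul_add_ac_mul hao hbo hc hy hy

lemma tmat_one_mem_TSet {y : F} (hy : v y ≤ ev 1) : tmat a b c 1 y ∈ TSet a b c :=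
  tmat_mem_TSet a b c (ne_zero_of_v_eq_ev (v_det_tmat_one hao hbo hc hy))

lemma v_torusAdd_sub_self {y z : F} (hy : v y ≤ ev 1) (hz : v z ≤ ev 1) :
    v (torusAdd a b c y z - y) = v z := by
  have hD := v_one_sub_ac_mul hao hc hy hz
  rw [torusAdd_sub_self (ne_zero_of_v_eq_ev hD), map_div₀, v.map_mul, hD,
    v_det_tmat_one hao hbo hc hy, ev_zero, mul_one, div_one]

lemma v_torusAdd_sub_torusAdd {y y' z : F} (hy : v y ≤ ev 1) (hy' : v y' ≤ ev 1)
    (hz : v z ≤ ev 1) : v (torusAdd a b c y z - torusAdd a b c y' z) = v (y - y') := by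
  have hD := v_one_sub_ac_mul hao hc hy hz
  have hD' := v_one_sub_ac_mul hao hc hy' hz
  rw [torusAdd_sub_torusAdd (ne_zero_of_v_eq_ev hD) (ne_zero_of_v_eq_ev hD'), map_div₀,
    v.map_mul, v.map_mul, hD, hD', v_det_tmat_one hao hbo hc hz, ev_zero, mul_one, mul_one,
    div_one]

lemma v_torusAdd_le {y z : F} {g : Zm0} (hy1 : v y ≤ ev 1) (hz1 : v z ≤ ev 1) (hy : v y ≤ g)
    (hz : v z ≤ g) : v (torusAdd a b c y z) ≤ g := by
  rw [← add_sub_cancel y (torusAdd a b c y z)]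
  exact v.map_add_le hy (v_torusAdd_sub_self hao hbo hc hy1 hz1 ▸ hz)

lemma exists_torusAdd_eq {y w : F} (hy : v y ≤ ev 1) (hw : v w ≤ ev 1) :
    ∃ d, v d = v (y - w) ∧ torusAdd a b c w d = y := by
  have hN := v_one_sub_b_mul_add_ac_mul hao hbo hc hw hy
  refine ⟨(y - w) / (1 - b * w + a * c * (w * y)), ?_, torusAdd_div_eq (ne_zero_of_v_eq_ev hN)
    (ne_zero_of_v_eq_ev (v_det_tmat_one hao hbo hc hw))⟩
  rw [map_div₀, hN, ev_zero, div_one]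

end Valuation

section Character

variable {v : Valuation F Zm0} {a b c : F} {Ω : Matrix (Fin 2) (Fin 2) F → ℂ}
  (hao : v a ≤ ev 0) (hbo : v b ≤ ev 0) (hc : v c = ev 0)
  (hΩmul : ∀ s t, s ∈ TSet a b c → t ∈ TSet a b c → Ω (s * t) = Ω s * Ω t)
  (hunit : ∀ u : F, v u = ev 0 → Ω (u • (1 : Matrix (Fin 2) (Fin 2) F)) = 1)

include hΩmul hunit in
lemma omega_smul {u : F} {t : Matrix (Fin 2) (Fin 2) F} (hu : v u = ev 0)
    (ht : t ∈ TSet a b c) : Ω (u • t) = Ω t := by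
  have hu1 : u • (1 : Matrix (Fin 2) (Fin 2) F) ∈ TSet a b c := by
    rw [smul_one_eq_tmat a b c]
    exact tmat_mem_TSet a b c (by simpa [tmat_det] using ne_zero_of_v_eq_ev hu)
  rw [← smul_one_mul, hΩmul _ _ hu1 ht, hunit u hu, one_mul]

include hao hbo hc hΩmul hunit in
lemma omega_mul_omega {y z : F} (hy : v y ≤ ev 1) (hz : v z ≤ ev 1) :
    Ω (tmat a b c 1 y) * Ω (tmat a b c 1 z) = Ω (tmat a b c 1 (torusAdd a b c y z)) := by
  have hD := v_one_sub_ac_mul hao hc hy hz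
  rw [← hΩmul _ _ (tmat_one_mem_TSet hao hbo hc hy) (tmat_one_mem_TSet hao hbo hc hz),
    tmat_one_mul_tmat_one (ne_zero_of_v_eq_ev hD), omega_smul hΩmul hunit hD
      (tmat_one_mem_TSet hao hbo hc (v_torusAdd_le hao hbo hc hy hz hy hz))]

variable {C : ℕ} (hcond : ∀ t, Umem v a b c C t → Ω t = 1)

include hao hbo hc hcond in
lemma omega_eq_one_of_le {y : F} (hC : C ≠ 0) (hy : v y ≤ ev C) :
    Ω (tmat a b c 1 y) = 1 := by
  have hy1 : v y ≤ ev 1 := hy.trans (ev_le_ev.mpr (by omega))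
  refine hcond _ ⟨tmat_one_mem_TSet hao hbo hc hy1, ?_⟩
  rw [if_neg hC, tmat_sub_one]
  simp only [Fin.forall_fin_two, Matrix.of_apply, Matrix.cons_val', Matrix.cons_val_zero,
    Matrix.cons_val_one, Matrix.empty_val', Matrix.cons_val_fin_one, sub_self,
    zero_sub, v.map_zero, v.map_neg]
  exact ⟨⟨zero_le, (v_mul_le_of_le_ev_zero hc.le).trans hy⟩,
    (v_mul_le_of_le_ev_zero hao).trans hy, (v_mul_le_of_le_ev_zero hbo).trans hy⟩

include hao hbo hc hΩmul hunit hcond in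
lemma omega_congr {y w : F} (hC : C ≠ 0) (hy : v y ≤ ev 1) (hw : v w ≤ ev 1)
    (hyw : v (y - w) ≤ ev C) : Ω (tmat a b c 1 y) = Ω (tmat a b c 1 w) := by
  obtain ⟨d, hd, rfl⟩ := exists_torusAdd_eq hao hbo hc hy hw
  rw [← omega_mul_omega hao hbo hc hΩmul hunit hw (hd.trans_le (v.map_sub_le hy hw)),
    omega_eq_one_of_le hao hbo hc hcond hC (hd.trans_le hyw), mul_one]

include hao hbo hc hΩmul hunit in
lemma exists_omega_ne_one (hC : 2 ≤ C) (hnontriv : ∃ t, Umem v a b c (C - 1) t ∧ Ω t ≠ 1) :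
    ∃ z : F, v z ≤ ev ((C : ℤ) - 1) ∧ Ω (tmat a b c 1 z) ≠ 1 := by
  obtain ⟨t, ⟨⟨x, y, hdet, rfl⟩, hU⟩, hΩt⟩ := hnontriv
  rw [if_neg (by omega), tmat_sub_one] at hU
  have hCℤ : ((C - 1 : ℕ) : ℤ) = (C : ℤ) - 1 := by omega
  have hCle : ev ((C : ℤ) - 1) ≤ ev 1 := ev_le_ev.mpr (by omega)
  have hx1 : v (x - 1) ≤ ev ((C : ℤ) - 1) := by simpa [hCℤ] using hU 0 0
  have hy : v y ≤ ev ((C : ℤ) - 1) := by simpa [hCℤ, hc, ev_zero] using hU 0 1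
  have hx : v x = ev 0 := by simpa using v_one_add_eq (hx1.trans hCle)
  have hyx : v (y / x) = v y := by rw [map_div₀, hx, ev_zero, div_one]
  refine ⟨y / x, hyx.trans_le hy, fun h => hΩt ?_⟩
  rw [← h, ← omega_smul hΩmul hunit hx
    (tmat_one_mem_TSet hao hbo hc (hyx.trans_le (hy.trans hCle))), smul_tmat, mul_one,
    mul_div_cancel₀ _ (ne_zero_of_v_eq_ev hx)]

include hao hbo hc hΩmul hunit hcond in
lemma sum_inv_omega_eq_zero (hC : C ≠ 0) {z : F} (hz : v z ≤ ev 1)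
    (hΩz : Ω (tmat a b c 1 z) ≠ 1) {W : Finset F} (hW : ∀ r ∈ W, v r ≤ ev 1)
    (hsep : ∀ r ∈ W, ∀ s ∈ W, v (r - s) ≤ ev C → r = s)
    (hclosed : ∀ r ∈ W, ∃ s ∈ W, v (torusAdd a b c r z - s) ≤ ev C) :
    ∑ r ∈ W, (Ω (tmat a b c 1 r))⁻¹ = 0 := by
  choose! g hgW hg using hclosed
  refine Finset.sum_eq_zero_of_comp_eq_mul (inv_ne_one.mpr hΩz) hgW ?_ fun r hr => ?_
  · intro r hr s hs hrs
    refine hsep r hr s hs ?_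
    have h := v.map_sub_le (hg r hr) (hg s hs)
    rwa [hrs, sub_sub_sub_cancel_right,
      v_torusAdd_sub_torusAdd hao hbo hc (hW r hr) (hW s hs) hz] at h
  · have hrz := v_torusAdd_le hao hbo hc (hW r hr) hz (hW r hr) hz
    rw [← omega_congr hao hbo hc hΩmul hunit hcond hC hrz (hW _ (hgW r hr)) (hg r hr),
      ← omega_mul_omega hao hbo hc hΩmul hunit (hW r hr) hz, mul_inv]

variable {k : ℕ} {Y : Finset F} (hY : ∀ y ∈ Y, v y = ev k)
  (hrep : ∀ y : F, v y = ev k → ∃! r, r ∈ Y ∧ v (y - r) ≤ ev C)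

include hY hrep in
lemma eq_of_mem_reps {r s : F} (hr : r ∈ Y) (hs : s ∈ Y) (hrs : v (r - s) ≤ ev C) : r = s := by
  obtain ⟨ρ, -, hρ⟩ := hrep r (hY r hr)
  exact (hρ r ⟨hr, by simp⟩).trans (hρ s ⟨hs, hrs⟩).symm

include hY hrep in
lemma eq_of_mem_insert_zero_reps [DecidableEq F] (hk : k < C) {r s : F} (hr : r ∈ insert 0 Y)
    (hs : s ∈ insert 0 Y) (hrs : v (r - s) ≤ ev C) : r = s := by
  have hY0 : ∀ y ∈ Y, ¬ v y ≤ ev C := fun y hy h =>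
    absurd (ev_le_ev.mp ((hY y hy).symm.trans_le h)) (by omega)
  rcases Finset.mem_insert.mp hr with rfl | hr <;> rcases Finset.mem_insert.mp hs with rfl | hs
  · rfl
  · exact absurd (by simpa using hrs) (hY0 s hs)
  · exact absurd (by simpa using hrs) (hY0 r hr)
  · exact eq_of_mem_reps hY hrep hr hs hrs

include hrep in
lemma exists_mem_insert_zero_reps [DecidableEq F] (hk : k + 1 = C) {x : F} (hx : v x ≤ ev k) :
    ∃ s ∈ insert 0 Y, v (x - s) ≤ ev C := by
  rcases hx.eq_or_lt with hx | hx
  · obtain ⟨s, ⟨hs, hxs⟩, -⟩ := hrep x hx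
    exact ⟨s, Finset.mem_insert_of_mem hs, hxs⟩
  · refine ⟨0, Finset.mem_insert_self 0 Y, ?_⟩
    rw [sub_zero, ← hk, Nat.cast_succ]
    exact le_ev_add_one_of_lt hx

include hao hbo hc hΩmul hunit hcond hY hrep in
lemma sum_reps_eq_zero (hk0 : 0 < k) (hk : k + 1 < C)
    (hnontriv : ∃ t, Umem v a b c (C - 1) t ∧ Ω t ≠ 1) :
    ∑ y ∈ Y, (Ω (tmat a b c 1 y))⁻¹ = 0 := by
  obtain ⟨z, hzC, hΩz⟩ := exists_omega_ne_one hao hbo hc hΩmul hunit (by omega) hnontriv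
  have hk1 : ev k ≤ ev 1 := ev_le_ev.mpr (by omega)
  have hzk : v z < ev k := hzC.trans_lt (ev_lt_ev.mpr (by omega))
  have hY1 : ∀ r ∈ Y, v r ≤ ev 1 := fun r hr => (hY r hr).trans_le hk1
  refine sum_inv_omega_eq_zero hao hbo hc hΩmul hunit hcond (by omega) (hzk.le.trans hk1) hΩz
    hY1 (fun r hr s hs => eq_of_mem_reps hY hrep hr hs) fun r hr => ?_
  have hrz : v (torusAdd a b c r z) = ev k := by
    rw [← add_sub_cancel r (torusAdd a b c r z), v.map_add_eq_of_lt_left, hY r hr]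
    rwa [v_torusAdd_sub_self hao hbo hc (hY1 r hr) (hzk.le.trans hk1), hY r hr]
  obtain ⟨s, ⟨hs, hrs⟩, -⟩ := hrep _ hrz
  exact ⟨s, hs, hrs⟩

include hao hbo hc hΩmul hunit hcond hY hrep in
lemma sum_reps_eq_neg_one [DecidableEq F] (hk0 : 0 < k) (hk : k + 1 = C)
    (hnontriv : ∃ t, Umem v a b c (C - 1) t ∧ Ω t ≠ 1) :
    ∑ y ∈ Y, (Ω (tmat a b c 1 y))⁻¹ = -1 := by
  obtain ⟨z, hzC, hΩz⟩ := exists_omega_ne_one hao hbo hc hΩmul hunit (by omega) hnontriv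
  have hzk : v z ≤ ev k := hzC.trans_eq (by congr 1; omega)
  have hk1 : ev k ≤ ev 1 := ev_le_ev.mpr (by omega)
  have hW : ∀ r ∈ insert 0 Y, v r ≤ ev k := by
    simpa using fun r hr => (hY r hr).le
  have hsum := sum_inv_omega_eq_zero hao hbo hc hΩmul hunit hcond (by omega) (hzk.trans hk1)
    hΩz (fun r hr => (hW r hr).trans hk1)
    (fun r hr s hs => eq_of_mem_insert_zero_reps hY hrep (by omega) hr hs)
    fun r hr => exists_mem_insert_zero_reps hrep hk
      (v_torusAdd_le hao hbo hc ((hW r hr).trans hk1) (hzk.trans hk1) (hW r hr) hzk)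
  have h0 : (0 : F) ∉ Y := fun h => ne_zero_of_v_eq_ev (hY 0 h) rfl
  rw [Finset.sum_insert h0, omega_eq_one_of_le hao hbo hc hcond (by omega) (by simp), inv_one]
    at hsum
  linear_combination hsum

include hao hbo hc hcond hY hrep in
lemma sum_reps_eq_one (hk : k = C) (hC : C ≠ 0) {ϖ : F} (hϖ : v ϖ = ev 1) :
    ∑ y ∈ Y, (Ω (tmat a b c 1 y))⁻¹ = 1 := by
  subst hk
  obtain ⟨ρ, ⟨hρ, -⟩, -⟩ := hrep (ϖ ^ k) (by rw [map_pow, hϖ, ev_pow])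
  have hYρ : Y = {ρ} := Finset.eq_singleton_iff_unique_mem.mpr
    ⟨hρ, fun s hs => eq_of_mem_reps hY hrep hs hρ
      (v.map_sub_le (hY s hs).le (hY ρ hρ).le)⟩
  rw [hYρ, Finset.sum_singleton, omega_eq_one_of_le hao hbo hc hcond hC (hY ρ hρ).le, inv_one]

end Character

theorem stmt17_general
    (v : Valuation F Zm0) (ϖ : F) (hϖ : v ϖ = ev 1)
    (a b c : F)
    (hao : v a ≤ ev 0) (hbo : v b ≤ ev 0) (hc : v c = ev 0)
    (C : ℕ)
    (Ω : Matrix (Fin 2) (Fin 2) F → ℂ)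
    (hΩmul : ∀ s t, s ∈ TSet a b c → t ∈ TSet a b c → Ω (s * t) = Ω s * Ω t)
    -- Ω has conductor exponent C: trivial on U_C, nontrivial on U_{C−1} :
    (hcond : ∀ t, Umem v a b c C t → Ω t = 1)
    (hnontriv : ∃ t, Umem v a b c (C - 1) t ∧ Ω t ≠ 1)
    -- Ω(u·1) = 1 for u ∈ 𝔬^× :
    (hunit : ∀ u : F, v u = ev 0 → Ω (u • (1 : Matrix (Fin 2) (Fin 2) F)) = 1) :
    ∀ k : ℕ, 0 < k → k ≤ C →
      -- Ω(t(1,y)) depends only on the class of y mod 𝔭^C, for y of valuation k :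
      ((∀ y y' : F, v y = ev k → v y' = ev k → v (y - y') ≤ ev C →
          Ω (tmat a b c 1 y) = Ω (tmat a b c 1 y'))
      -- the sums S_k over any set of representatives of { y ∈ 𝔬/𝔭^C : v(y) = k } :
      ∧ (∀ Y : Finset F, (∀ y ∈ Y, v y = ev k) →
          (∀ y : F, v y = ev k → ∃! r, r ∈ Y ∧ v (y - r) ≤ ev C) →
          ((k < C - 1 → (∑ y ∈ Y, (Ω (tmat a b c 1 y))⁻¹) = 0)
            ∧ (k = C - 1 → 1 < C → (∑ y ∈ Y, (Ω (tmat a b c 1 y))⁻¹) = -1)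
            ∧ (k = C → (∑ y ∈ Y, (Ω (tmat a b c 1 y))⁻¹) = 1)))) := by
  classical
  intro k hk hkC
  have hk1 : ev k ≤ ev 1 := ev_le_ev.mpr (by omega)
  refine ⟨fun y y' hy hy' hyy' => ?_,
    fun Y hY hrep => ⟨fun hlt => ?_, fun hkeq hC => ?_, fun hkeq => ?_⟩⟩
  · exact omega_congr hao hbo hc hΩmul hunit hcond (by omega) (hy.trans_le hk1)
      (hy'.trans_le hk1) hyy'
  · exact sum_reps_eq_zero hao hbo hc hΩmul hunit hcond hY hrep hk (by omega) hnontriv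
  · exact sum_reps_eq_neg_one hao hbo hc hΩmul hunit hcond hY hrep hk (by omega) hnontriv
  · exact sum_reps_eq_one hao hbo hc hcond hY hrep hkeq (by omega) hϖ

/-- character sums S_k = Σ Ω(t(1,y))⁻¹ over representatives of the classes
{ y ∈ 𝔬/𝔭^C : v(y) = k }, for a character Ω of T(F) of conductor exponent C ≥ 1 which is
trivial on 𝔬^×·1.  Also Ω(t(1,y)) only depends on y mod 𝔭^C. -/
theorem stmt17
    (v : Valuation F Zm0) (ϖ : F) (hϖ : v ϖ = ev 1)
    (a b c : F)
    (hao : v a ≤ ev 0) (hbo : v b ≤ ev 0) (hc : v c = ev 0)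
    (hd0 : b ^ 2 - 4 * (a * c) ≠ 0)
    (C : ℕ) (hC : 1 ≤ C)
    (Ω : Matrix (Fin 2) (Fin 2) F → ℂ)
    (hΩmul : ∀ s t, s ∈ TSet a b c → t ∈ TSet a b c → Ω (s * t) = Ω s * Ω t)
    (hΩne : ∀ t ∈ TSet a b c, Ω t ≠ 0)
    -- Ω has conductor exponent C: trivial on U_C, nontrivial on U_{C−1} :
    (hcond : ∀ t, Umem v a b c C t → Ω t = 1)
    (hnontriv : ∃ t, Umem v a b c (C - 1) t ∧ Ω t ≠ 1)
    -- Ω(u·1) = 1 for u ∈ 𝔬^× :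
    (hunit : ∀ u : F, v u = ev 0 → Ω (u • (1 : Matrix (Fin 2) (Fin 2) F)) = 1) :
    ∀ k : ℕ, 0 < k → k ≤ C →
      -- Ω(t(1,y)) depends only on the class of y mod 𝔭^C, for y of valuation k :
      ((∀ y y' : F, v y = ev k → v y' = ev k → v (y - y') ≤ ev C →
          Ω (tmat a b c 1 y) = Ω (tmat a b c 1 y'))
      -- the sums S_k over any set of representatives of { y ∈ 𝔬/𝔭^C : v(y) = k } :
      ∧ (∀ Y : Finset F, (∀ y ∈ Y, v y = ev k) →
          (∀ y : F, v y = ev k → ∃! r, r ∈ Y ∧ v (y - r) ≤ ev C) →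
          ((k < C - 1 → (∑ y ∈ Y, (Ω (tmat a b c 1 y))⁻¹) = 0)
            ∧ (k = C - 1 → 1 < C → (∑ y ∈ Y, (Ω (tmat a b c 1 y))⁻¹) = -1)
            ∧ (k = C → (∑ y ∈ Y, (Ω (tmat a b c 1 y))⁻¹) = 1)))) :=
  stmt17_general v ϖ hϖ a b c hao hbo hc C Ω hΩmul hcond hnontriv hunit
end
end
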